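/- If J ⊆ I are right ideals of R with J·R^e = I·R^e, then Kdim(I/J) < m (with the convention that this holds when I = J). -/

import Mathlib

set_option linter.unusedVariables false

/-- `devLE k A` : the deviation (in the Gabriel–Rentschler sense) of the
poset `A` is `≤ k` (for `k : ℕ`).  `devLE 0 A` says every descending chain
eventually stabilizes (DCC), and `devLE (k+1) A` says that in any descending
chain all but finitely many of the factor intervals have deviation `≤ k`. -/
def devLE : ℕ → (A : Type*) → [inst : Preorder A] → Prop
  | 0, A, _ => ∀ f : ℕ → A, Antitone f → ∃ N, ∀ i, N ≤ i → f (i + 1) = f i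
  | (k+1), A, _ => ∀ f : ℕ → A, Antitone f →
      ∃ N, ∀ i, N ≤ i → devLE k (Set.Icc (f (i + 1)) (f i))

/-- The Gabriel–Rentschler Krull dimension of the right `R`-module `M`
(a module over `Rᵐᵒᵖ`) is `≤ k` : the deviation of its submodule lattice is `≤ k`. -/
def kdimLE (R M : Type*) [Ring R] [AddCommGroup M] [Module Rᵐᵒᵖ M] (k : ℕ) : Prop :=
  devLE k (Submodule Rᵐᵒᵖ M)

/-- `c` is a regular element of `R` (neither a left nor a right zero divisor). -/
def regElem (R : Type*) [Ring R] (c : R) : Prop :=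
  (∀ x : R, c * x = 0 → x = 0) ∧ (∀ x : R, x * c = 0 → x = 0)

/-- `C_m = {c ∈ R | Kdim(R/cR) < m}` (for `0 < m`, `Kdim < m` is `Kdim ≤ m-1`). -/
def rCm (R : Type*) [Ring R] (m : ℕ) : Set R :=
  {c | kdimLE R (R ⧸ Submodule.span Rᵐᵒᵖ ({c} : Set R)) (m - 1)}

/-- The m-Gabriel filter `g = {right ideals I | Kdim(R/I) < m}`. -/
def gFilt (R : Type*) [Ring R] (m : ℕ) : Set (Submodule Rᵐᵒᵖ R) :=
  {I | kdimLE R (R ⧸ I) (m - 1)}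

/-- A right ideal `P` is a (two-sided) prime ideal of `R`. -/
def isTwoSidedPrime (R : Type*) [Ring R] (P : Submodule Rᵐᵒᵖ R) : Prop :=
  (∀ a ∈ P, ∀ r : R, r * a ∈ P) ∧ P ≠ ⊤ ∧
    ∀ a b : R, (∀ r : R, a * r * b ∈ P) → a ∈ P ∨ b ∈ P

/-- `c ∈ C(P)` : `c` is regular modulo `P`. -/
def regModP (R : Type*) [Ring R] (P : Submodule Rᵐᵒᵖ R) (c : R) : Prop :=
  ∀ x : R, (c * x ∈ P → x ∈ P) ∧ (x * c ∈ P → x ∈ P)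

/-- `X_m` : the set of (two-sided) prime ideals `P` with `Kdim(R/P) = m`. -/
def xSet (R : Type*) [Ring R] (m : ℕ) : Set (Submodule Rᵐᵒᵖ R) :=
  {P | isTwoSidedPrime R P ∧ kdimLE R (R ⧸ P) m ∧ ¬ kdimLE R (R ⧸ P) (m - 1)}

/-- `V_m = ⋂_{P ∈ X_m} C(P)`. -/
def vSet (R : Type*) [Ring R] (m : ℕ) : Set R :=
  {v | ∀ P ∈ xSet R m, regModP R P v}

/-- Left multiplication by `a` as a right-module (`Rᵐᵒᵖ`-module) endomorphism of `R`. -/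
def lmulHom (R : Type*) [Ring R] (a : R) : R →ₗ[Rᵐᵒᵖ] R where
  toFun x := a * x
  map_add' x y := mul_add a x y
  map_smul' r x := by
    simp [MulOpposite.smul_eq_mul_unop, mul_assoc]

/-- `Q` is a classical right quotient ring of `R` via `f : R →+* Q` :
`f` is injective, regular elements of `R` become units in `Q`, and every
element of `Q` is a right fraction `f a * (f s)⁻¹`. -/
def isRightQuotientRing (R Q : Type*) [Ring R] [Ring Q] (f : R →+* Q) : Prop :=
  Function.Injective f ∧ (∀ s : R, regElem R s → IsUnit (f s)) ∧
    ∀ q : Q, ∃ a s : R, regElem R s ∧ q * f s = f a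

/-- `R^e = {q ∈ Q | qJ ⊆ R for some J in the m-Gabriel filter}`, as a subset of `Q`. -/
def reSet (R Q : Type*) [Ring R] [Ring Q] (f : R →+* Q) (m : ℕ) : Set Q :=
  {q | ∃ J ∈ gFilt R m, ∀ j ∈ J, ∃ r : R, q * f j = f r}

/-- The extension `A·R^e` of a set `A ⊆ R` : the additive subgroup of `Q`
generated by products `f a * q` with `a ∈ A`, `q ∈ R^e` (a right ideal of `R^e`). -/
def extSet (R Q : Type*) [Ring R] [Ring Q] (f : R →+* Q) (m : ℕ) (A : Set R) : Set Q :=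
  (AddSubgroup.closure {x : Q | ∃ a ∈ A, ∃ q ∈ reSet R Q f m, x = f a * q} : Set Q)

/-- The right `R`-module structure on `Q` induced by `f : R →+* Q`. -/
def qMod (R Q : Type*) [Ring R] [Ring Q] (f : R →+* Q) : Module Rᵐᵒᵖ Q :=
  Module.compHom Q (RingHom.op f)

/-! Each `a ∈ I` has `f a ∈ I·R^e = J·R^e`; unwinding the generators of `J·R^e` gives a right
ideal `J' ∈ g` with `aJ' ⊆ J`, so the cyclic submodule of `I/J` generated by `a` is a quotient of
`R/J'` and has Krull dimension `< m`. Since `I/J` is noetherian, a maximal submodule of dimension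
`< m` contains all these cyclic submodules, hence is `I/J`. The bound passes to sums because
deviation can only drop along strictly monotone maps of posets, which makes it stable under
submodules, quotients and extensions. -/

theorem devLE_of_subsingleton : ∀ {k : ℕ} {A : Type*} [Preorder A] [Subsingleton A], devLE k A
  | 0, _, _, _ => fun _ _ => ⟨0, fun _ _ => Subsingleton.elim _ _⟩
  | _ + 1, _, _, _ => fun _ _ => ⟨0, fun _ _ => devLE_of_subsingleton⟩

theorem devLE_of_strictMono : ∀ {k : ℕ} {A B : Type*} [PartialOrder A] [PartialOrder B]
    {φ : A → B}, StrictMono φ → devLE k B → devLE k A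
  | 0, _, _, _, _, φ, hφ, hB => fun f hf => by
      obtain ⟨N, hN⟩ := hB (φ ∘ f) (hφ.monotone.comp_antitone hf)
      exact ⟨N, fun i hi => (hf i.le_succ).eq_of_not_lt fun h => (hφ h).ne (hN i hi)⟩
  | _ + 1, _, _, _, _, φ, hφ, hB => fun f hf => by
      obtain ⟨N, hN⟩ := hB (φ ∘ f) (hφ.monotone.comp_antitone hf)
      exact ⟨N, fun i hi => devLE_of_strictMono
        (φ := fun x => ⟨φ x, hφ.monotone x.2.1, hφ.monotone x.2.2⟩) (fun _ _ h => hφ h) (hN i hi)⟩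

theorem devLE_prod : ∀ {k : ℕ} {A B : Type*} [PartialOrder A] [PartialOrder B],
    devLE k A → devLE k B → devLE k (A × B)
  | 0, _, _, _, _, hA, hB => fun f hf => by
      obtain ⟨N₁, h₁⟩ := hA (fun i => (f i).1) fun _ _ h => (hf h).1
      obtain ⟨N₂, h₂⟩ := hB (fun i => (f i).2) fun _ _ h => (hf h).2
      exact ⟨max N₁ N₂, fun i hi => Prod.ext (h₁ i (le_of_max_le_left hi))
        (h₂ i (le_of_max_le_right hi))⟩
  | _ + 1, _, _, _, _, hA, hB => fun f hf => by
      obtain ⟨N₁, h₁⟩ := hA (fun i => (f i).1) fun _ _ h => (hf h).1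
      obtain ⟨N₂, h₂⟩ := hB (fun i => (f i).2) fun _ _ h => (hf h).2
      refine ⟨max N₁ N₂, fun i hi => devLE_of_strictMono
        (φ := fun x => (⟨x.1.1, x.2.1.1, x.2.2.1⟩, ⟨x.1.2, x.2.1.2, x.2.2.2⟩)) ?_
        (devLE_prod (h₁ i (le_of_max_le_left hi)) (h₂ i (le_of_max_le_right hi)))⟩
      exact Monotone.strictMono_of_injective (fun _ _ h => h)
        fun _ _ h => Subtype.ext (Prod.ext (congrArg (·.1.1) h) (congrArg (·.2.1) h))

section Module

variable {R M M' : Type*} [Ring R] [AddCommGroup M] [Module Rᵐᵒᵖ M]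
  [AddCommGroup M'] [Module Rᵐᵒᵖ M'] {k : ℕ}

theorem kdimLE_of_subsingleton [Subsingleton M] : kdimLE R M k :=
  haveI := (Submodule.subsingleton_iff Rᵐᵒᵖ).mpr ‹Subsingleton M›
  devLE_of_subsingleton

theorem kdimLE_of_injective {g : M →ₗ[Rᵐᵒᵖ] M'} (hg : Function.Injective g)
    (h : kdimLE R M' k) : kdimLE R M k :=
  devLE_of_strictMono (Submodule.map_strictMono_of_injective hg) h

theorem kdimLE_of_surjective {g : M →ₗ[Rᵐᵒᵖ] M'} (hg : Function.Surjective g)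
    (h : kdimLE R M k) : kdimLE R M' k :=
  devLE_of_strictMono (Submodule.comap_strictMono_of_surjective hg) h

theorem kdimLE_of_submodule_of_quotient (N : Submodule Rᵐᵒᵖ M)
    (hN : kdimLE R N k) (hMN : kdimLE R (M ⧸ N) k) : kdimLE R M k :=
  devLE_of_strictMono
    (φ := Prod.map N.mapIic.symm N.comapMkQRelIso.symm ∘
      fun S => (⟨S ⊓ N, Set.mem_Iic.mpr inf_le_right⟩, ⟨S ⊔ N, Set.mem_Ici.mpr le_sup_right⟩))
    ((N.mapIic.symm.strictMono.prodMap N.comapMkQRelIso.symm.strictMono).comp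
      fun _ _ h => strictMono_inf_prod_sup h)
    (devLE_prod hN hMN)

theorem kdimLE_prod (h : kdimLE R M k) (h' : kdimLE R M' k) : kdimLE R (M × M') k := by
  refine kdimLE_of_submodule_of_quotient (LinearMap.ker (LinearMap.snd Rᵐᵒᵖ M M'))
    (kdimLE_of_injective (g := LinearMap.fst Rᵐᵒᵖ M M' ∘ₗ Submodule.subtype _) ?_ h)
    (kdimLE_of_injective (LinearMap.quotKerEquivOfSurjective _ LinearMap.snd_surjective).injective h')
  rintro ⟨x, hx⟩ ⟨y, hy⟩ hxy
  exact Subtype.ext (Prod.ext hxy (hx.trans hy.symm))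

theorem kdimLE_sup {N N' : Submodule Rᵐᵒᵖ M} (h : kdimLE R N k) (h' : kdimLE R N' k) :
    kdimLE R ↥(N ⊔ N') k := by
  rw [Submodule.sup_eq_range]
  exact kdimLE_of_surjective (LinearMap.surjective_rangeRestrict _) (kdimLE_prod h h')

theorem kdimLE_of_forall_exists_mem [IsNoetherian Rᵐᵒᵖ M]
    (h : ∀ x : M, ∃ N : Submodule Rᵐᵒᵖ M, x ∈ N ∧ kdimLE R N k) : kdimLE R M k := by
  obtain ⟨N, hN, hmax⟩ := set_has_maximal_iff_noetherian.mpr ‹_› {N | kdimLE R N k}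
    ⟨_, (h 0).choose_spec.2⟩
  have hN_top : N = ⊤ := by
    refine Submodule.eq_top_iff'.mpr fun x => ?_
    obtain ⟨N', hxN', hN'⟩ := h x
    have hsup : N = N ⊔ N' := le_sup_left.lt_or_eq.resolve_left (hmax _ (kdimLE_sup hN hN'))
    exact hsup ▸ Submodule.mem_sup_right hxN'
  exact kdimLE_of_surjective Submodule.topEquiv.surjective (hN_top ▸ hN)

theorem kdimLE_span_singleton_of_smul_eq_zero {x : M} {J : Submodule Rᵐᵒᵖ R}
    (hJ : ∀ j ∈ J, MulOpposite.op j • x = 0) (h : kdimLE R (R ⧸ J) k) :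
    kdimLE R (Rᵐᵒᵖ ∙ x) k := by
  let φ := LinearMap.toSpanSingleton Rᵐᵒᵖ M x ∘ₗ (MulOpposite.opLinearEquiv Rᵐᵒᵖ).toLinearMap
  have hφ : LinearMap.range φ = Rᵐᵒᵖ ∙ x := by
    rw [LinearMap.range_comp_of_range_eq_top _ (LinearEquiv.range _),
      LinearMap.range_toSpanSingleton]
  have hJφ : J ≤ LinearMap.ker φ.rangeRestrict := by
    rw [LinearMap.ker_rangeRestrict]
    exact fun j hj => hJ j hj
  have hsurj : Function.Surjective (J.liftQ φ.rangeRestrict hJφ) := by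
    rw [← LinearMap.range_eq_top, Submodule.range_liftQ, LinearMap.range_rangeRestrict]
  exact hφ ▸ kdimLE_of_surjective hsurj h

end Module

section GabrielFilter

variable {R : Type*} [Ring R] {m : ℕ}

theorem top_mem_gFilt : (⊤ : Submodule Rᵐᵒᵖ R) ∈ gFilt R m :=
  haveI : Subsingleton (R ⧸ (⊤ : Submodule Rᵐᵒᵖ R)) := Submodule.Quotient.subsingleton_iff.mpr rfl
  kdimLE_of_subsingleton

theorem inf_mem_gFilt {J J' : Submodule Rᵐᵒᵖ R} (h : J ∈ gFilt R m) (h' : J' ∈ gFilt R m) :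
    J ⊓ J' ∈ gFilt R m := by
  have hker : LinearMap.ker (J.mkQ.prod J'.mkQ) = J ⊓ J' := by
    rw [LinearMap.ker_prod, Submodule.ker_mkQ, Submodule.ker_mkQ]
  refine kdimLE_of_injective (g := (J ⊓ J').liftQ (J.mkQ.prod J'.mkQ) hker.ge) ?_ (kdimLE_prod h h')
  exact LinearMap.ker_eq_bot.mp (Submodule.ker_liftQ_eq_bot _ _ _ hker.le)

end GabrielFilter

section Extension

variable {R Q : Type*} [Ring R] [Ring Q] (f : R →+* Q) (m : ℕ)

theorem one_mem_reSet : (1 : Q) ∈ reSet R Q f m :=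
  ⟨⊤, top_mem_gFilt, fun j _ => ⟨j, one_mul _⟩⟩

theorem map_mem_extSet {A : Set R} {a : R} (ha : a ∈ A) : f a ∈ extSet R Q f m A :=
  AddSubgroup.subset_closure ⟨a, ha, 1, one_mem_reSet f m, (mul_one _).symm⟩

theorem exists_mem_gFilt_of_mem_extSet {J : Submodule Rᵐᵒᵖ R} {x : Q}
    (hx : x ∈ extSet R Q f m J) : ∃ J' ∈ gFilt R m, ∀ j ∈ J', ∃ r ∈ J, x * f j = f r := by
  induction hx using AddSubgroup.closure_induction with
  | mem x hx =>
      obtain ⟨a, haJ, q, ⟨J', hJ', hq⟩, rfl⟩ := hx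
      refine ⟨J', hJ', fun j hj => ?_⟩
      obtain ⟨r, hr⟩ := hq j hj
      exact ⟨a * r, J.smul_mem (MulOpposite.op r) haJ, by rw [mul_assoc, hr, map_mul]⟩
  | zero => exact ⟨⊤, top_mem_gFilt, fun _ _ => ⟨0, J.zero_mem, by simp⟩⟩
  | add x y _ _ hx hy =>
      obtain ⟨J₁, h₁, hx⟩ := hx
      obtain ⟨J₂, h₂, hy⟩ := hy
      refine ⟨J₁ ⊓ J₂, inf_mem_gFilt h₁ h₂, fun j hj => ?_⟩
      obtain ⟨r₁, hr₁J, hr₁⟩ := hx j hj.1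
      obtain ⟨r₂, hr₂J, hr₂⟩ := hy j hj.2
      exact ⟨r₁ + r₂, J.add_mem hr₁J hr₂J, by rw [add_mul, hr₁, hr₂, map_add]⟩
  | neg x _ hx =>
      obtain ⟨J', hJ', hx⟩ := hx
      refine ⟨J', hJ', fun j hj => ?_⟩
      obtain ⟨r, hrJ, hr⟩ := hx j hj
      exact ⟨-r, J.neg_mem hrJ, by rw [neg_mul, hr, map_neg]⟩

end Extension

theorem stmt17_general (R : Type) [Ring R] [IsNoetherian Rᵐᵒᵖ R]
    (m : ℕ)
    (Q : Type) [Ring Q] (f : R →+* Q) (hQ : isRightQuotientRing R Q f) :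
    ∀ I J : Submodule Rᵐᵒᵖ R, J ≤ I → extSet R Q f m ↑J = extSet R Q f m ↑I →
      kdimLE R (↥I ⧸ Submodule.comap I.subtype J) (m - 1) := by
  intro I J _ hext
  have hann : ∀ a ∈ I, ∃ J' ∈ gFilt R m, ∀ j ∈ J', a * j ∈ J := by
    intro a ha
    obtain ⟨J', hJ', hJ'a⟩ := exists_mem_gFilt_of_mem_extSet f m (hext ▸ map_mem_extSet f m ha)
    refine ⟨J', hJ', fun j hj => ?_⟩
    obtain ⟨r, hrJ, hr⟩ := hJ'a j hj
    rwa [hQ.1 (show f (a * j) = f r by rw [map_mul, hr])]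
  refine kdimLE_of_forall_exists_mem fun x => ?_
  obtain ⟨⟨a, ha⟩, rfl⟩ := Submodule.Quotient.mk_surjective _ x
  obtain ⟨J', hJ', haJ'⟩ := hann a ha
  refine ⟨_, Submodule.mem_span_singleton_self _,
    kdimLE_span_singleton_of_smul_eq_zero (fun j hj => ?_) hJ'⟩
  rw [← Submodule.Quotient.mk_smul, Submodule.Quotient.mk_eq_zero]
  exact haJ' j hj

theorem stmt17 (R : Type) [Ring R] [Nontrivial R] [IsNoetherian Rᵐᵒᵖ R]
    (hprime : ∀ a b : R, (∀ r : R, a * r * b = 0) → a = 0 ∨ b = 0)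
    (n m : ℕ) (hm : 0 < m) (hmn : m < n)
    (hdim : kdimLE R R n ∧ ¬ kdimLE R R (n - 1))
    (Q : Type) [Ring Q] (f : R →+* Q) (hQ : isRightQuotientRing R Q f) :
    ∀ I J : Submodule Rᵐᵒᵖ R, J ≤ I → extSet R Q f m ↑J = extSet R Q f m ↑I →
      kdimLE R (↥I ⧸ Submodule.comap I.subtype J) (m - 1) :=
  stmt17_general R m Q f hQ
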